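/- arXiv:2402.08003 — 2 statements merged into one kernel-verified Lean document; each statement's English description precedes it below -/
import Mathlib

section
/- Consequences of maximal violation (two-party): Let A₀, A₁ be Hermitian n×n matrices and B₀, B₁ Hermitian m×m matrices with A₀² ⪯ Iₙ, A₁² ⪯ Iₙ, B₀² ⪯ Iₘ, B₁² ⪯ Iₘ, let a, b ∈ {0,1}, and let ψ ∈ ℂⁿ ⊗ ℂᵐ be a unit vector with ⟨ψ| B̂_{a,b} |ψ⟩ = 2. Then: (1) ((−1)^a Ã₁ ⊗ Iₘ) ψ = (Iₙ ⊗ B₁) ψ; (2) ((−1)^{a+b} Ã₀ ⊗ Iₘ) ψ = (Iₙ ⊗ B₀) ψ; and (3) (A_i² ⊗ Iₘ) ψ = ψ and (Iₙ ⊗ B_i²) ψ = ψ for i = 0, 1 (so the observables act as unitaries on the state). -/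
/-!
Consequences of maximal violation (two-party): if a unit vector `ψ` satisfies
`⟨ψ| B̂_{a,b} |ψ⟩ = 2`, then `((−1)^a Ã₁ ⊗ I) ψ = (I ⊗ B₁) ψ`,
`((−1)^{a+b} Ã₀ ⊗ I) ψ = (I ⊗ B₀) ψ`, and `(A_i² ⊗ I) ψ = ψ`, `(I ⊗ B_i²) ψ = ψ`.
-/

open Matrix Finset
open scoped Matrix Kronecker ComplexOrder

noncomputable section

/-- `tildeA A 0 = (A₀ - A₁)/√2` and `tildeA A 1 = (A₀ + A₁)/√2`. -/
def tildeA {n : Type*} (A : Fin 2 → Matrix n n ℂ) (j : Fin 2) : Matrix n n ℂ :=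
  (Real.sqrt 2 : ℂ)⁻¹ • (A 0 + (-1 : ℂ) ^ ((j : ℕ) + 1) • A 1)

/-- The Bell operator `B̂_{a,b} = (−1)^a (Ã₁ ⊗ B₁ + (−1)^b Ã₀ ⊗ B₀)`. -/
def BellOp {n m : Type*} (A : Fin 2 → Matrix n n ℂ) (B : Fin 2 → Matrix m m ℂ)
    (a b : Fin 2) : Matrix (n × m) (n × m) ℂ :=
  (-1 : ℂ) ^ (a : ℕ) • (tildeA A 1 ⊗ₖ B 1 + (-1 : ℂ) ^ (b : ℕ) • (tildeA A 0 ⊗ₖ B 0))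

/-!
With `s₀ = (−1)^{a+b}`, `s₁ = (−1)^a` and `D_j = s_j Ã_j ⊗ I − I ⊗ B_j`, the tensor factors
commute and `Ã₀² + Ã₁² = A₀² + A₁²`, which gives the sum-of-squares decomposition
`4 − 2 B̂_{a,b} = D₀² + D₁² + ∑ᵢ (I − A_i²) ⊗ I + ∑ᵢ I ⊗ (I − B_i²)`
into positive semidefinite terms. At `ψ` the left side has expectation `4 − 2·2 = 0`, so every
term annihilates `ψ`; for the Hermitian `D_j`, `D_j² ψ = 0` forces `D_j ψ = 0`.
-/

namespace Matrix

section Kronecker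

variable {α l m n p : Type*}

theorem sub_kronecker [Ring α] (A₁ A₂ : Matrix l m α) (B : Matrix n p α) :
    (A₁ - A₂) ⊗ₖ B = A₁ ⊗ₖ B - A₂ ⊗ₖ B := by
  ext; simp [sub_mul]

theorem kronecker_sub [Ring α] (A : Matrix l m α) (B₁ B₂ : Matrix n p α) :
    A ⊗ₖ (B₁ - B₂) = A ⊗ₖ B₁ - A ⊗ₖ B₂ := by
  ext; simp [mul_sub]

theorem IsHermitian.kronecker [CommRing α] [StarRing α] {A : Matrix m m α} {B : Matrix n n α}
    (hA : A.IsHermitian) (hB : B.IsHermitian) : (A ⊗ₖ B).IsHermitian := by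
  rw [IsHermitian, conjTranspose_kronecker, hA.eq, hB.eq]

variable [Fintype m] [Fintype n] [DecidableEq m] [DecidableEq n]

theorem commute_kronecker_one_one_kronecker [CommRing α] (A : Matrix m m α) (B : Matrix n n α) :
    Commute (A ⊗ₖ (1 : Matrix n n α)) ((1 : Matrix m m α) ⊗ₖ B) := by
  simp only [Commute, SemiconjBy, ← mul_kronecker_mul, mul_one, one_mul]

theorem smul_kronecker_one_sub_one_kronecker_sq [CommRing α] {s : α} (hs : s ^ 2 = 1)
    (A : Matrix m m α) (B : Matrix n n α) :
    (s • (A ⊗ₖ (1 : Matrix n n α)) - (1 : Matrix m m α) ⊗ₖ B) ^ 2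
      = (A ^ 2) ⊗ₖ (1 : Matrix n n α) + (1 : Matrix m m α) ⊗ₖ (B ^ 2) - (2 * s) • (A ⊗ₖ B) := by
  have hmul : s • (A ⊗ₖ (1 : Matrix n n α)) * ((1 : Matrix m m α) ⊗ₖ B) = s • (A ⊗ₖ B) := by
    rw [smul_mul_assoc, ← mul_kronecker_mul, mul_one, one_mul]
  rw [((commute_kronecker_one_one_kronecker A B).smul_left s).sub_sq, smul_pow, hs, one_smul,
    mul_assoc, hmul, two_mul, sq, sq, sq, sq, ← mul_kronecker_mul, ← mul_kronecker_mul, one_mul,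
    one_mul]
  module

end Kronecker

section PositiveSemidefinite

variable {𝕜 n : Type*} [RCLike 𝕜] [Fintype n]

theorem IsHermitian.sq_posSemidef [DecidableEq n] {H : Matrix n n 𝕜} (hH : H.IsHermitian) :
    (H ^ 2).PosSemidef := by
  rw [sq]
  nth_rw 1 [← hH.eq]
  exact posSemidef_conjTranspose_mul_self H

theorem IsHermitian.mulVec_eq_zero_of_sq_mulVec_eq_zero [DecidableEq n] {H : Matrix n n 𝕜}
    (hH : H.IsHermitian) {x : n → 𝕜} (h : (H ^ 2) *ᵥ x = 0) : H *ᵥ x = 0 := by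
  have hnorm : star (H *ᵥ x) ⬝ᵥ (H *ᵥ x) = 0 := by
    rw [star_mulVec, hH.eq, ← dotProduct_mulVec, mulVec_mulVec, ← sq, h, dotProduct_zero]
  exact dotProduct_star_self_eq_zero.mp hnorm

theorem mulVec_eq_zero_of_dotProduct_sum_mulVec_eq_zero {ι : Type*} [Fintype ι]
    {M : ι → Matrix n n 𝕜} (hM : ∀ i, (M i).PosSemidef) {x : n → 𝕜}
    (h : star x ⬝ᵥ (∑ i, M i) *ᵥ x = 0) (i : ι) : M i *ᵥ x = 0 := by
  rw [sum_mulVec, dotProduct_sum,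
    Finset.sum_eq_zero_iff_of_nonneg fun j _ => (hM j).dotProduct_mulVec_nonneg x] at h
  exact ((hM i).dotProduct_mulVec_zero_iff x).mp (h i (Finset.mem_univ i))

end PositiveSemidefinite

end Matrix

section Bell

variable {n m : Type*} (A : Fin 2 → Matrix n n ℂ) (B : Fin 2 → Matrix m m ℂ)

variable {A} in
theorem tildeA_isHermitian (hA : ∀ x, (A x).IsHermitian) (j : Fin 2) :
    (tildeA A j).IsHermitian :=
  ((hA 0).add ((hA 1).smul (by simp [IsSelfAdjoint]))).smul (by simp [IsSelfAdjoint])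

theorem tildeA_zero_sq_add_tildeA_one_sq [Fintype n] [DecidableEq n] :
    tildeA A 0 ^ 2 + tildeA A 1 ^ 2 = A 0 ^ 2 + A 1 ^ 2 := by
  have hc : ((Real.sqrt 2 : ℂ)⁻¹) ^ 2 = 2⁻¹ := by
    rw [inv_pow, ← Complex.ofReal_pow, Real.sq_sqrt zero_le_two]; norm_num
  simp only [tildeA, smul_pow, hc, Fin.isValue, Fin.val_zero, Fin.val_one, zero_add, pow_one,
    neg_smul, one_smul, ← sub_eq_add_neg, one_add_one_eq_two, even_two, Even.neg_one_pow]
  simp only [sq, add_mul, mul_add, sub_mul, mul_sub]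
  module

/-- The sign of the `j`-th correlator `Ã_j ⊗ B_j` in `B̂_{a,b}`. -/
def bellSign (a b : Fin 2) : Fin 2 → ℂ
  | 0 => (-1) ^ ((a : ℕ) + (b : ℕ))
  | 1 => (-1) ^ (a : ℕ)

theorem bellSign_sq (a b j : Fin 2) : bellSign a b j ^ 2 = 1 := by
  fin_cases j <;> simp [bellSign, ← pow_mul]

theorem isSelfAdjoint_bellSign (a b j : Fin 2) : IsSelfAdjoint (bellSign a b j) := by
  fin_cases j <;> simp [bellSign, IsSelfAdjoint]

theorem bellOp_eq_sum (a b : Fin 2) :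
    BellOp A B a b = ∑ j, bellSign a b j • (tildeA A j ⊗ₖ B j) := by
  rw [Fin.sum_univ_two, BellOp, smul_add, smul_smul, ← pow_add, add_comm]
  rfl

variable [DecidableEq n] [DecidableEq m]

def bellDefect (a b j : Fin 2) : Matrix (n × m) (n × m) ℂ :=
  bellSign a b j • (tildeA A j ⊗ₖ (1 : Matrix m m ℂ)) - (1 : Matrix n n ℂ) ⊗ₖ B j

variable {A B} in
theorem bellDefect_isHermitian (hA : ∀ x, (A x).IsHermitian) (hB : ∀ x, (B x).IsHermitian)
    (a b j : Fin 2) :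
    (bellDefect A B a b j).IsHermitian :=
  (((tildeA_isHermitian hA j).kronecker isHermitian_one).smul (isSelfAdjoint_bellSign a b j)).sub
    (isHermitian_one.kronecker (hB j))

variable [Fintype n] [Fintype m]

def bellSosTerm (a b : Fin 2) : Fin 2 ⊕ Fin 2 ⊕ Fin 2 → Matrix (n × m) (n × m) ℂ
  | .inl j => bellDefect A B a b j ^ 2
  | .inr (.inl i) => (1 - A i ^ 2) ⊗ₖ (1 : Matrix m m ℂ)
  | .inr (.inr i) => (1 : Matrix n n ℂ) ⊗ₖ (1 - B i ^ 2)

theorem sum_bellSosTerm (a b : Fin 2) :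
    ∑ t, bellSosTerm A B a b t = (4 : ℂ) • 1 - (2 : ℂ) • BellOp A B a b := by
  have hsq : (tildeA A 0 ^ 2) ⊗ₖ (1 : Matrix m m ℂ) + (tildeA A 1 ^ 2) ⊗ₖ (1 : Matrix m m ℂ)
      = (A 0 ^ 2) ⊗ₖ (1 : Matrix m m ℂ) + (A 1 ^ 2) ⊗ₖ (1 : Matrix m m ℂ) := by
    rw [← add_kronecker, ← add_kronecker, tildeA_zero_sq_add_tildeA_one_sq]
  simp only [Fintype.sum_sum_type, Fin.sum_univ_two, bellSosTerm, bellDefect,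
    smul_kronecker_one_sub_one_kronecker_sq (bellSign_sq a b _), bellOp_eq_sum, sub_kronecker,
    kronecker_sub, one_kronecker_one]
  linear_combination (norm := module) hsq

variable {A B} in
theorem bellSosTerm_posSemidef (hAh : ∀ x, (A x).IsHermitian) (hBh : ∀ x, (B x).IsHermitian)
    (hA1 : ∀ x, (1 - A x ^ 2).PosSemidef) (hB1 : ∀ x, (1 - B x ^ 2).PosSemidef) (a b : Fin 2) :
    ∀ t, (bellSosTerm A B a b t).PosSemidef
  | .inl j => (bellDefect_isHermitian hAh hBh a b j).sq_posSemidef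
  | .inr (.inl i) => (hA1 i).kronecker .one
  | .inr (.inr i) => PosSemidef.one.kronecker (hB1 i)

end Bell

theorem maximal_violation_consequences_two_party (n m : ℕ)
    (A : Fin 2 → Matrix (Fin n) (Fin n) ℂ) (B : Fin 2 → Matrix (Fin m) (Fin m) ℂ)
    (hAh : ∀ x, (A x).IsHermitian) (hBh : ∀ x, (B x).IsHermitian)
    (hA1 : ∀ x, ((1 : Matrix (Fin n) (Fin n) ℂ) - A x ^ 2).PosSemidef)
    (hB1 : ∀ x, ((1 : Matrix (Fin m) (Fin m) ℂ) - B x ^ 2).PosSemidef)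
    (a b : Fin 2) (ψ : Fin n × Fin m → ℂ)
    (hψ : star ψ ⬝ᵥ ψ = 1)
    (hmax : star ψ ⬝ᵥ (BellOp A B a b) *ᵥ ψ = 2) :
    (((-1 : ℂ) ^ (a : ℕ) • (tildeA A 1 ⊗ₖ (1 : Matrix (Fin m) (Fin m) ℂ))) *ᵥ ψ
        = ((1 : Matrix (Fin n) (Fin n) ℂ) ⊗ₖ B 1) *ᵥ ψ) ∧
    (((-1 : ℂ) ^ ((a : ℕ) + (b : ℕ)) • (tildeA A 0 ⊗ₖ (1 : Matrix (Fin m) (Fin m) ℂ))) *ᵥ ψ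
        = ((1 : Matrix (Fin n) (Fin n) ℂ) ⊗ₖ B 0) *ᵥ ψ) ∧
    (∀ i : Fin 2, ((A i ^ 2) ⊗ₖ (1 : Matrix (Fin m) (Fin m) ℂ)) *ᵥ ψ = ψ) ∧
    (∀ i : Fin 2, ((1 : Matrix (Fin n) (Fin n) ℂ) ⊗ₖ (B i ^ 2)) *ᵥ ψ = ψ) := by
  have hform : star ψ ⬝ᵥ (∑ t, bellSosTerm A B a b t) *ᵥ ψ = 0 := by
    rw [sum_bellSosTerm, sub_mulVec, smul_mulVec, smul_mulVec, one_mulVec, dotProduct_sub,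
      dotProduct_smul, dotProduct_smul, hψ, hmax]
    norm_num
  have hterm := mulVec_eq_zero_of_dotProduct_sum_mulVec_eq_zero
    (bellSosTerm_posSemidef hAh hBh hA1 hB1 a b) hform
  have hdefect (j : Fin 2) : bellDefect A B a b j *ᵥ ψ = 0 :=
    (bellDefect_isHermitian hAh hBh a b j).mulVec_eq_zero_of_sq_mulVec_eq_zero (hterm (.inl j))
  refine ⟨?_, ?_, fun i => ?_, fun i => ?_⟩
  · simpa only [bellDefect, bellSign, sub_mulVec, sub_eq_zero] using hdefect 1
  · simpa only [bellDefect, bellSign, sub_mulVec, sub_eq_zero] using hdefect 0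
  · simpa only [bellSosTerm, sub_kronecker, one_kronecker_one, sub_mulVec, one_mulVec,
      sub_eq_zero, eq_comm] using hterm (.inr (.inl i))
  · simpa only [bellSosTerm, kronecker_sub, one_kronecker_one, sub_mulVec, one_mulVec,
      sub_eq_zero, eq_comm] using hterm (.inr (.inr i))

end
end

section
/- Consequences of maximal violation (N-party): Let N ≥ 2, let A_{1,0}, A_{1,1} be Hermitian on ℂ^{d₁} and A_{n,0}, A_{n,1} Hermitian on ℂ^{d_n} (n = 2,…,N), all with squares ⪯ identity, let a ∈ {0,1}^N, and let ψ ∈ ℂ^{d₁} ⊗ ⋯ ⊗ ℂ^{d_N} be a unit vector with ⟨ψ| B̂_a |ψ⟩ = 2(N−1). Then: (1) ((−1)^{a₁} Ã_{1,1} ⊗ I) ψ = (I ⊗ A_{2,1} ⊗ ⋯ ⊗ A_{N,1}) ψ; (2) for every n = 2,…,N, ((−1)^{a₁+a_n} Ã_{1,0} ⊗ I) ψ = A_{n,0}^{(n)} ψ; and (3) (A_{1,i}² ⊗ I) ψ = ψ for i = 0,1, (I ⊗ A_{2,1}² ⊗ ⋯ ⊗ A_{N,1}²) ψ = ψ, and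 (A_{n,0}²)^{(n)} ψ = ψ for n = 2,…,N. -/
/-! Consequences of maximal violation of the N-party Bell inequality. -/

open Matrix Finset
open scoped Matrix Kronecker ComplexOrder

noncomputable section

def PauliX : Matrix (Fin 2) (Fin 2) ℂ := !![0, 1; 1, 0]

def PauliZ : Matrix (Fin 2) (Fin 2) ℂ := !![1, 0; 0, -1]

/-- Kronecker product of a family of matrices, on index `Π n, p n`. -/
def famKron {N : ℕ} {p q : Fin N → Type*} (M : ∀ n, Matrix (p n) (q n) ℂ) :
    Matrix (∀ n, p n) (∀ n, q n) ℂ :=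
  Matrix.of fun s t => ∏ n, M n (s n) (t n)

/-- The N-party Bell operator
`B̂_a = (−1)^{a₁} [ (N−1) Ã_{1,1} ⊗ A_{2,1} ⊗ ⋯ ⊗ A_{N,1}
        + Σ_{n=2}^N (−1)^{a_n} Ã_{1,0} ⊗ A_{n,0}^{(n)} ]`,
where party `n` of the paper corresponds to index `n−1 : Fin N`. -/
def NBell {N : ℕ} [NeZero N] {d : Fin N → ℕ}
    (A : ∀ n, Fin 2 → Matrix (Fin (d n)) (Fin (d n)) ℂ) (a : Fin N → Fin 2) :
    Matrix (∀ n, Fin (d n)) (∀ n, Fin (d n)) ℂ :=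
  (-1 : ℂ) ^ (a 0 : ℕ) •
    (((N : ℂ) - 1) • famKron (Function.update (fun n => A n 1) 0 (tildeA (A 0) 1)) +
      ∑ n ∈ Finset.univ.erase 0, (-1 : ℂ) ^ (a n : ℕ) •
        famKron (Function.update
          (Function.update (fun m => (1 : Matrix (Fin (d m)) (Fin (d m)) ℂ))
            0 (tildeA (A 0) 0)) n (A n 0)))

/-- The GHZ-like state `|φ_a⟩ = (|a₁ … a_N⟩ + (−1)^{a₁} |1−a₁ … 1−a_N⟩)/√2`. -/
def ghz {N : ℕ} [NeZero N] (a : Fin N → Fin 2) : (Fin N → Fin 2) → ℂ := fun s =>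
  (Real.sqrt 2 : ℂ)⁻¹ *
    ((if s = a then 1 else 0) +
      (-1 : ℂ) ^ (a 0 : ℕ) * (if s = (fun n => a n + 1) then 1 else 0))

/-!
The proof is a sum-of-squares decomposition of the Bell operator. Put
`U = (-1)^{a₁} Ã_{1,1} ⊗ I`, `V = I ⊗ A_{2,1} ⊗ ⋯ ⊗ A_{N,1}`, `W_n = (-1)^{a₁+a_n} Ã_{1,0} ⊗ I`
and `Z_n = A_{n,0}^{(n)}`, so that `B̂_a = Σ_{n≥2} (U V + W_n Z_n)`. Since
`Ã_{1,0}² + Ã_{1,1}² = A_{1,0}² + A_{1,1}²` and `U` commutes with `V`, `W_n` with `Z_n`,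

  `4 - 2 (U V + W_n Z_n)`
  `  = (U - V)² + (W_n - Z_n)² + (1 - A_{1,0}²) + (1 - A_{1,1}²) + (1 - V²) + (1 - Z_n²)`,

and every term on the right is positive semidefinite: a tensor product of operators between `0`
and `1` again lies between `0` and `1`. Summed over `n`, the expectation of the left side in `ψ`
is `4(N-1) - 2⟨ψ, B̂_a ψ⟩ = 0`, so each term on the right has expectation `0` and therefore
annihilates `ψ`; these are exactly the claimed identities.
-/

theorem Pi.mulSingle_mul_update_one {ι : Type*} [DecidableEq ι] {f : ι → Type*}
    [∀ i, MulOneClass (f i)] (g : ∀ i, f i) (i : ι) (x : f i) :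
    Pi.mulSingle i x * Function.update g i 1 = Function.update g i x := by
  rw [Pi.mulSingle, ← Function.update_mul, one_mul, mul_one]

theorem Pi.update_one_mul_mulSingle {ι : Type*} [DecidableEq ι] {f : ι → Type*}
    [∀ i, MulOneClass (f i)] (g : ∀ i, f i) (i : ι) (x : f i) :
    Function.update g i 1 * Pi.mulSingle i x = Function.update g i x := by
  rw [Pi.mulSingle, ← Function.update_mul, one_mul, mul_one]

theorem Pi.mulSingle_mul_mulSingle_of_ne {ι : Type*} [DecidableEq ι] {f : ι → Type*}
    [∀ i, MulOneClass (f i)] {i j : ι} (hij : i ≠ j) (x : f i) (y : f j) :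
    Pi.mulSingle i x * Pi.mulSingle j y = Function.update (Pi.mulSingle i x) j y := by
  ext l
  rcases eq_or_ne l j with rfl | hl <;> simp [*]

theorem Function.update_pow {ι : Type*} [DecidableEq ι] {f : ι → Type*}
    [∀ i, Monoid (f i)] (g : ∀ i, f i) (i : ι) (x : f i) (k : ℕ) :
    Function.update g i x ^ k = Function.update (g ^ k) i (x ^ k) := by
  ext j
  rcases eq_or_ne j i with rfl | hj <;> simp [*]

theorem Matrix.IsHermitian.posSemidef_sq {m : Type*} [Fintype m] [DecidableEq m]
    {X : Matrix m m ℂ} (hX : X.IsHermitian) : (X ^ 2).PosSemidef := by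
  simpa [sq, hX.eq] using posSemidef_conjTranspose_mul_self X

theorem Matrix.PosSemidef.mulVec_eq_zero_of_add {m : Type*} [Fintype m] {P Q : Matrix m m ℂ}
    (hP : P.PosSemidef) (hQ : Q.PosSemidef) {x : m → ℂ} (h : (P + Q) *ᵥ x = 0) :
    P *ᵥ x = 0 ∧ Q *ᵥ x = 0 := by
  have hx : star x ⬝ᵥ P *ᵥ x + star x ⬝ᵥ Q *ᵥ x = 0 := by
    rw [← dotProduct_add, ← add_mulVec, h, dotProduct_zero]
  obtain ⟨hPx, hQx⟩ := (add_eq_zero_iff_of_nonneg (hP.dotProduct_mulVec_nonneg x)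
    (hQ.dotProduct_mulVec_nonneg x)).mp hx
  exact ⟨(hP.dotProduct_mulVec_zero_iff x).mp hPx, (hQ.dotProduct_mulVec_zero_iff x).mp hQx⟩

theorem isSelfAdjoint_neg_one_pow (k : ℕ) : IsSelfAdjoint ((-1 : ℂ) ^ k) :=
  (IsSelfAdjoint.one ℂ).neg.pow k

theorem neg_one_pow_smul_sq {R : Type*} [Ring R] [Algebra ℂ R] (k : ℕ) (X : R) :
    ((-1 : ℂ) ^ k • X) ^ 2 = X ^ 2 := by
  rw [smul_pow, ← pow_mul, pow_mul', neg_one_sq, one_pow, one_smul]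

section famKron

variable {N : ℕ} {p : Fin N → Type*}

theorem famKron_one [∀ n, DecidableEq (p n)] : famKron (1 : ∀ n, Matrix (p n) (p n) ℂ) = 1 := by
  ext s t
  by_cases h : s = t
  · subst h; simp [famKron]
  · obtain ⟨n, hn⟩ := Function.ne_iff.mp h
    simpa [famKron, h] using Finset.prod_eq_zero (mem_univ n) (by simp [one_apply, hn])

theorem famKron_conjTranspose (M : ∀ n, Matrix (p n) (p n) ℂ) :
    (famKron M)ᴴ = famKron (star M) := by
  ext s t
  simp [famKron, star_prod]

theorem famKron_isHermitian {M : ∀ n, Matrix (p n) (p n) ℂ} (h : ∀ n, (M n).IsHermitian) :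
    (famKron M).IsHermitian := by
  rw [IsHermitian, famKron_conjTranspose]
  exact congrArg famKron (funext h)

theorem famKron_update_apply (M : ∀ n, Matrix (p n) (p n) ℂ) (k : Fin N)
    (X : Matrix (p k) (p k) ℂ) (s t : ∀ n, p n) :
    famKron (Function.update M k X) s t = X (s k) (t k) * ∏ n ∈ univ.erase k, M n (s n) (t n) := by
  rw [famKron, of_apply, ← mul_prod_erase _ _ (mem_univ k), Function.update_self]
  exact congrArg _ (prod_congr rfl fun n hn => by rw [Function.update_of_ne (ne_of_mem_erase hn)])

theorem famKron_update_add (M : ∀ n, Matrix (p n) (p n) ℂ) (k : Fin N)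
    (X Y : Matrix (p k) (p k) ℂ) :
    famKron (Function.update M k (X + Y)) =
      famKron (Function.update M k X) + famKron (Function.update M k Y) := by
  ext s t
  simp only [famKron_update_apply, Matrix.add_apply, add_mul]

theorem famKron_update_sub (M : ∀ n, Matrix (p n) (p n) ℂ) (k : Fin N)
    (X Y : Matrix (p k) (p k) ℂ) :
    famKron (Function.update M k (X - Y)) =
      famKron (Function.update M k X) - famKron (Function.update M k Y) := by
  ext s t
  simp only [famKron_update_apply, Matrix.sub_apply, sub_mul]

variable [∀ n, Fintype (p n)]

theorem famKron_mul (M P : ∀ n, Matrix (p n) (p n) ℂ) :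
    famKron (M * P) = famKron M * famKron P := by
  ext s t
  simp only [famKron, mul_apply, of_apply, Pi.mul_apply, Finset.prod_univ_sum,
    Fintype.piFinset_univ, Finset.prod_mul_distrib]

theorem famKron_pow [∀ n, DecidableEq (p n)] (M : ∀ n, Matrix (p n) (p n) ℂ) (k : ℕ) :
    famKron (M ^ k) = famKron M ^ k := by
  induction k with
  | zero => exact famKron_one
  | succ k ih => rw [pow_succ, famKron_mul, ih, pow_succ]

theorem famKron_commute {M P : ∀ n, Matrix (p n) (p n) ℂ} (h : Commute M P) :
    Commute (famKron M) (famKron P) := by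
  rw [commute_iff_eq, ← famKron_mul, ← famKron_mul, h.eq]

variable [∀ n, DecidableEq (p n)]

theorem famKron_posSemidef {M : ∀ n, Matrix (p n) (p n) ℂ} (h : ∀ n, (M n).PosSemidef) :
    (famKron M).PosSemidef := by
  obtain ⟨B, rfl⟩ : ∃ B : ∀ n, Matrix (p n) (p n) ℂ, M = star B * B := by
    open scoped MatrixOrder in
    choose B hB using fun n => CStarAlgebra.nonneg_iff_eq_star_mul_self.mp (h n).nonneg
    exact ⟨B, funext hB⟩
  rw [famKron_mul, ← famKron_conjTranspose]
  exact posSemidef_conjTranspose_mul_self _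

theorem posSemidef_one_sub_famKron {M : ∀ n, Matrix (p n) (p n) ℂ}
    (h₀ : ∀ n, (M n).PosSemidef) (h₁ : ∀ n, (1 - M n).PosSemidef) :
    (1 - famKron M).PosSemidef := by
  classical
  suffices ∀ s : Finset (Fin N), (1 - famKron (s.piecewise M 1)).PosSemidef by
    simpa using this univ
  intro s
  induction s using Finset.induction_on with
  | empty => simpa [famKron_one] using PosSemidef.zero
  | insert k s hk ih =>
    set f := s.piecewise M 1
    have hf : ∀ n, (f n).PosSemidef := fun n => by
      by_cases hn : n ∈ s <;> simp [f, hn, h₀ n, PosSemidef.one]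
    have hstep : 1 - famKron (Function.update f k (M k)) =
        (1 - famKron f) + famKron (Function.update f k (1 - M k)) := by
      have hfk : Function.update f k 1 = f := Function.update_eq_self_iff.mpr (by simp [f, hk])
      rw [famKron_update_sub, hfk]
      abel
    rw [piecewise_insert, hstep]
    exact ih.add (famKron_posSemidef ((Function.forall_update_iff f _).mpr
      ⟨h₁ k, fun n _ => hf n⟩))

end famKron

section onFactor

variable {N : ℕ} {p : Fin N → Type*} [∀ n, DecidableEq (p n)]

/-- The paper's `X^{(k)}`: the matrix `X` acting on the `k`-th tensor factor. -/
def onFactor (k : Fin N) (X : Matrix (p k) (p k) ℂ) : Matrix (∀ n, p n) (∀ n, p n) ℂ :=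
  famKron (Pi.mulSingle k X)

theorem onFactor_add (k : Fin N) (X Y : Matrix (p k) (p k) ℂ) :
    onFactor k (X + Y) = onFactor k X + onFactor k Y :=
  famKron_update_add (1 : ∀ n, Matrix (p n) (p n) ℂ) k X Y

theorem isHermitian_onFactor {k : Fin N} {X : Matrix (p k) (p k) ℂ} (hX : X.IsHermitian) :
    (onFactor k X).IsHermitian :=
  famKron_isHermitian fun n => by
    rcases eq_or_ne n k with rfl | hn <;> simp [*, isHermitian_one]

variable [∀ n, Fintype (p n)]

theorem onFactor_pow (k : Fin N) (X : Matrix (p k) (p k) ℂ) (i : ℕ) :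
    onFactor k X ^ i = onFactor k (X ^ i) := by
  rw [onFactor, onFactor, ← famKron_pow, Pi.mulSingle_pow]

theorem onFactor_mul_famKron_update_one (k : Fin N) (X : Matrix (p k) (p k) ℂ)
    (M : ∀ n, Matrix (p n) (p n) ℂ) :
    onFactor k X * famKron (Function.update M k 1) = famKron (Function.update M k X) := by
  rw [onFactor, ← famKron_mul, Pi.mulSingle_mul_update_one]

theorem commute_onFactor_famKron_update_one (k : Fin N) (X : Matrix (p k) (p k) ℂ)
    (M : ∀ n, Matrix (p n) (p n) ℂ) :
    Commute (onFactor k X) (famKron (Function.update M k 1)) :=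
  famKron_commute <|
    (Pi.mulSingle_mul_update_one M k X).trans (Pi.update_one_mul_mulSingle M k X).symm

theorem onFactor_mul_onFactor_of_ne {j k : Fin N} (hjk : j ≠ k) (X : Matrix (p j) (p j) ℂ)
    (Y : Matrix (p k) (p k) ℂ) :
    onFactor j X * onFactor k Y = famKron (Function.update (Pi.mulSingle j X) k Y) := by
  rw [onFactor, onFactor, ← famKron_mul, Pi.mulSingle_mul_mulSingle_of_ne hjk]

theorem commute_onFactor_of_ne {j k : Fin N} (hjk : j ≠ k) (X : Matrix (p j) (p j) ℂ)
    (Y : Matrix (p k) (p k) ℂ) : Commute (onFactor j X) (onFactor k Y) :=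
  famKron_commute (Pi.mulSingle_commute (f := fun n => Matrix (p n) (p n) ℂ) hjk X Y)

theorem posSemidef_one_sub_onFactor {k : Fin N} {X : Matrix (p k) (p k) ℂ}
    (h₀ : X.PosSemidef) (h₁ : (1 - X).PosSemidef) : (1 - onFactor k X).PosSemidef := by
  refine posSemidef_one_sub_famKron (fun n => ?_) (fun n => ?_) <;>
    rcases eq_or_ne n k with rfl | hn <;> simp [*, PosSemidef.one, PosSemidef.zero]

end onFactor

theorem tildeA_isHermitian_s13 {n : Type*} {B : Fin 2 → Matrix n n ℂ} (hB : ∀ i, (B i).IsHermitian)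
    (j : Fin 2) : (tildeA B j).IsHermitian := by
  have hsqrt : IsSelfAdjoint ((Real.sqrt 2 : ℂ)⁻¹) := by
    simp [IsSelfAdjoint, Complex.conj_ofReal]
  exact ((hB 0).add ((hB 1).smul (isSelfAdjoint_neg_one_pow _))).smul hsqrt

theorem tildeA_sq_add_sq {n : Type*} [Fintype n] [DecidableEq n] (B : Fin 2 → Matrix n n ℂ) :
    tildeA B 0 ^ 2 + tildeA B 1 ^ 2 = B 0 ^ 2 + B 1 ^ 2 := by
  have hc : ((Real.sqrt 2 : ℂ)⁻¹) ^ 2 = 2⁻¹ := by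
    rw [inv_pow, ← Complex.ofReal_pow, Real.sq_sqrt zero_le_two, Complex.ofReal_ofNat]
  have hsum : (B 0 - B 1) ^ 2 + (B 0 + B 1) ^ 2 = (2 : ℂ) • (B 0 ^ 2 + B 1 ^ 2) := by
    rw [two_smul]; noncomm_ring
  simp only [tildeA, smul_pow, hc, Fin.val_zero, Fin.val_one, zero_add, pow_one, Nat.reduceAdd,
    neg_one_sq, neg_smul, one_smul, ← sub_eq_add_neg]
  rw [← smul_add, hsum, smul_smul, inv_mul_cancel₀ two_ne_zero, one_smul]

theorem conjTranspose_sub_mul_sub_of_commute {m : Type*} [Fintype m] [DecidableEq m]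
    {X Y : Matrix m m ℂ} (hX : X.IsHermitian) (hY : Y.IsHermitian) (hXY : Commute X Y) :
    (X - Y)ᴴ * (X - Y) = X ^ 2 + Y ^ 2 - (2 : ℂ) • (X * Y) := by
  rw [conjTranspose_sub, hX.eq, hY.eq, sub_mul, mul_sub, mul_sub, ← hXY.eq, sq, sq, two_smul]
  abel

/-- One summand `U V + W Z` of the Bell operator, together with the constraints under which its
expectation is at most `2`. -/
structure IsBellPair {m : Type*} [Fintype m] [DecidableEq m] (U V W Z G₀ G₁ : Matrix m m ℂ) :
    Prop where
  isHermitian_U : U.IsHermitian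
  isHermitian_V : V.IsHermitian
  isHermitian_W : W.IsHermitian
  isHermitian_Z : Z.IsHermitian
  commute_UV : Commute U V
  commute_WZ : Commute W Z
  sq_add_sq : U ^ 2 + W ^ 2 = G₀ + G₁
  posSemidef_one_sub_G₀ : (1 - G₀).PosSemidef
  posSemidef_one_sub_G₁ : (1 - G₁).PosSemidef
  posSemidef_one_sub_V_sq : (1 - V ^ 2).PosSemidef
  posSemidef_one_sub_Z_sq : (1 - Z ^ 2).PosSemidef

namespace IsBellPair

variable {m : Type*} [Fintype m] [DecidableEq m] {U V W Z G₀ G₁ : Matrix m m ℂ}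

theorem four_sub_two_smul_eq (h : IsBellPair U V W Z G₀ G₁) :
    (4 : ℂ) • 1 - (2 : ℂ) • (U * V + W * Z) =
      (U - V)ᴴ * (U - V) + ((W - Z)ᴴ * (W - Z) +
        ((1 - G₀) + ((1 - G₁) + ((1 - V ^ 2) + (1 - Z ^ 2))))) := by
  rw [conjTranspose_sub_mul_sub_of_commute h.isHermitian_U h.isHermitian_V h.commute_UV,
    conjTranspose_sub_mul_sub_of_commute h.isHermitian_W h.isHermitian_Z h.commute_WZ,
    eq_sub_of_add_eq' h.sq_add_sq.symm]
  module

theorem posSemidef_four_sub_two_smul (h : IsBellPair U V W Z G₀ G₁) :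
    ((4 : ℂ) • 1 - (2 : ℂ) • (U * V + W * Z)).PosSemidef := by
  rw [h.four_sub_two_smul_eq]
  exact (posSemidef_conjTranspose_mul_self _).add ((posSemidef_conjTranspose_mul_self _).add
    (h.posSemidef_one_sub_G₀.add (h.posSemidef_one_sub_G₁.add
      (h.posSemidef_one_sub_V_sq.add h.posSemidef_one_sub_Z_sq))))

theorem mulVec_eq_of_dotProduct_mulVec_eq_zero (h : IsBellPair U V W Z G₀ G₁) {x : m → ℂ}
    (hx : star x ⬝ᵥ ((4 : ℂ) • 1 - (2 : ℂ) • (U * V + W * Z)) *ᵥ x = 0) :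
    U *ᵥ x = V *ᵥ x ∧ W *ᵥ x = Z *ᵥ x ∧ G₀ *ᵥ x = x ∧ G₁ *ᵥ x = x ∧
      V ^ 2 *ᵥ x = x ∧ Z ^ 2 *ᵥ x = x := by
  have p₁ := posSemidef_conjTranspose_mul_self (U - V)
  have p₂ := posSemidef_conjTranspose_mul_self (W - Z)
  have p₃ := h.posSemidef_one_sub_G₀
  have p₄ := h.posSemidef_one_sub_G₁
  have p₅ := h.posSemidef_one_sub_V_sq
  have p₆ := h.posSemidef_one_sub_Z_sq
  rw [h.posSemidef_four_sub_two_smul.dotProduct_mulVec_zero_iff, h.four_sub_two_smul_eq] at hx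
  obtain ⟨h₁, hx⟩ := p₁.mulVec_eq_zero_of_add (p₂.add (p₃.add (p₄.add (p₅.add p₆)))) hx
  obtain ⟨h₂, hx⟩ := p₂.mulVec_eq_zero_of_add (p₃.add (p₄.add (p₅.add p₆))) hx
  obtain ⟨h₃, hx⟩ := p₃.mulVec_eq_zero_of_add (p₄.add (p₅.add p₆)) hx
  obtain ⟨h₄, hx⟩ := p₄.mulVec_eq_zero_of_add (p₅.add p₆) hx
  obtain ⟨h₅, h₆⟩ := p₅.mulVec_eq_zero_of_add p₆ hx
  rw [conjTranspose_mul_self_mulVec_eq_zero] at h₁ h₂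
  simp only [sub_mulVec, one_mulVec, sub_eq_zero] at h₁ h₂ h₃ h₄ h₅ h₆
  exact ⟨h₁, h₂, h₃.symm, h₄.symm, h₅.symm, h₆.symm⟩

theorem mulVec_eq_of_sum_eq_two_mul_card {ι : Type*} {s : Finset ι} {W Z : ι → Matrix m m ℂ}
    (h : ∀ i ∈ s, IsBellPair U V (W i) (Z i) G₀ G₁) {x : m → ℂ} (hx : star x ⬝ᵥ x = 1)
    (hB : star x ⬝ᵥ (∑ i ∈ s, (U * V + W i * Z i)) *ᵥ x = 2 * s.card) :
    ∀ i ∈ s, U *ᵥ x = V *ᵥ x ∧ W i *ᵥ x = Z i *ᵥ x ∧ G₀ *ᵥ x = x ∧ G₁ *ᵥ x = x ∧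
      V ^ 2 *ᵥ x = x ∧ Z i ^ 2 *ᵥ x = x := by
  have hsum : ∑ i ∈ s, star x ⬝ᵥ ((4 : ℂ) • 1 - (2 : ℂ) • (U * V + W i * Z i)) *ᵥ x = 0 := by
    simp only [sub_mulVec, smul_mulVec, one_mulVec, dotProduct_sub, dotProduct_smul, hx,
      smul_eq_mul, sum_sub_distrib, ← mul_sum, ← dotProduct_sum, ← sum_mulVec, hB, sum_const,
      nsmul_eq_mul]
    ring
  intro i hi
  refine (h i hi).mulVec_eq_of_dotProduct_mulVec_eq_zero ?_
  refine (sum_eq_zero_iff_of_nonneg fun j hj => ?_).mp hsum i hi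
  exact (h j hj).posSemidef_four_sub_two_smul.dotProduct_mulVec_nonneg x

end IsBellPair

section NBell

variable {N : ℕ} [NeZero N] {d : Fin N → ℕ}

theorem cast_card_univ_erase_zero : ((univ.erase (0 : Fin N)).card : ℂ) = N - 1 := by
  simp [card_erase_of_mem, Nat.cast_sub NeZero.one_le]

theorem nBell_eq_sum (A : ∀ n, Fin 2 → Matrix (Fin (d n)) (Fin (d n)) ℂ) (a : Fin N → Fin 2) :
    NBell A a = ∑ n ∈ univ.erase 0,
      (((-1 : ℂ) ^ (a 0 : ℕ) • onFactor 0 (tildeA (A 0) 1)) *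
          famKron (Function.update (fun n => A n 1) 0 1) +
        ((-1 : ℂ) ^ ((a 0 : ℕ) + (a n : ℕ)) • onFactor 0 (tildeA (A 0) 0)) *
          onFactor n (A n 0)) := by
  have hWZ : ∀ n ∈ univ.erase 0,
      famKron (Function.update (Function.update (fun m => (1 : Matrix (Fin (d m)) (Fin (d m)) ℂ))
        0 (tildeA (A 0) 0)) n (A n 0)) =
        onFactor 0 (tildeA (A 0) 0) * onFactor n (A n 0) := fun n hn =>
    (onFactor_mul_onFactor_of_ne (ne_of_mem_erase hn).symm _ _).symm
  rw [NBell, ← onFactor_mul_famKron_update_one, sum_add_distrib, sum_const,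
    ← Nat.cast_smul_eq_nsmul ℂ, cast_card_univ_erase_zero, smul_add, smul_sum]
  congr 1
  · rw [smul_comm, smul_mul_assoc]
  · refine sum_congr rfl fun n hn => ?_
    rw [hWZ n hn, pow_add, mul_smul, smul_mul_assoc, smul_mul_assoc]

theorem isBellPair_nBell_summand {A : ∀ n, Fin 2 → Matrix (Fin (d n)) (Fin (d n)) ℂ}
    (hAh : ∀ n x, (A n x).IsHermitian)
    (hAc : ∀ n x, ((1 : Matrix (Fin (d n)) (Fin (d n)) ℂ) - A n x ^ 2).PosSemidef)
    (a : Fin N → Fin 2) {n : Fin N} (hn : n ≠ 0) :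
    IsBellPair ((-1 : ℂ) ^ (a 0 : ℕ) • onFactor 0 (tildeA (A 0) 1))
      (famKron (Function.update (fun n => A n 1) 0 1))
      ((-1 : ℂ) ^ ((a 0 : ℕ) + (a n : ℕ)) • onFactor 0 (tildeA (A 0) 0)) (onFactor n (A n 0))
      (onFactor 0 (A 0 0 ^ 2)) (onFactor 0 (A 0 1 ^ 2)) where
  isHermitian_U :=
    (isHermitian_onFactor (tildeA_isHermitian_s13 (hAh 0) 1)).smul (isSelfAdjoint_neg_one_pow _)
  isHermitian_V := famKron_isHermitian fun m => by
    rcases eq_or_ne m 0 with rfl | hm <;> simp [*, isHermitian_one]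
  isHermitian_W :=
    (isHermitian_onFactor (tildeA_isHermitian_s13 (hAh 0) 0)).smul (isSelfAdjoint_neg_one_pow _)
  isHermitian_Z := isHermitian_onFactor (hAh n 0)
  commute_UV := (commute_onFactor_famKron_update_one _ _ _).smul_left _
  commute_WZ := (commute_onFactor_of_ne hn.symm _ _).smul_left _
  sq_add_sq := by
    rw [neg_one_pow_smul_sq, neg_one_pow_smul_sq, onFactor_pow, onFactor_pow, ← onFactor_add,
      ← onFactor_add, add_comm, tildeA_sq_add_sq]
  posSemidef_one_sub_G₀ := posSemidef_one_sub_onFactor (hAh 0 0).posSemidef_sq (hAc 0 0)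
  posSemidef_one_sub_G₁ := posSemidef_one_sub_onFactor (hAh 0 1).posSemidef_sq (hAc 0 1)
  posSemidef_one_sub_V_sq := by
    rw [← famKron_pow, Function.update_pow, one_pow]
    refine posSemidef_one_sub_famKron (fun m => ?_) (fun m => ?_) <;>
      rcases eq_or_ne m 0 with rfl | hm <;>
      simp [*, fun k => (hAh k 1).posSemidef_sq, PosSemidef.one, PosSemidef.zero]
  posSemidef_one_sub_Z_sq := by
    rw [onFactor_pow]
    exact posSemidef_one_sub_onFactor (hAh n 0).posSemidef_sq (hAc n 0)

end NBell

theorem maximal_violation_consequences_N_party (N : ℕ) [NeZero N] (hN : 2 ≤ N)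
    (d : Fin N → ℕ)
    (A : ∀ n, Fin 2 → Matrix (Fin (d n)) (Fin (d n)) ℂ)
    (hAh : ∀ n x, (A n x).IsHermitian)
    (hAc : ∀ n x, ((1 : Matrix (Fin (d n)) (Fin (d n)) ℂ) - A n x ^ 2).PosSemidef)
    (a : Fin N → Fin 2) (ψ : (∀ n, Fin (d n)) → ℂ)
    (hψ : star ψ ⬝ᵥ ψ = 1)
    (hmax : star ψ ⬝ᵥ (NBell A a) *ᵥ ψ = 2 * ((N : ℂ) - 1)) :
    -- (1)
    (((-1 : ℂ) ^ (a 0 : ℕ) •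
        famKron (Function.update (fun m => (1 : Matrix (Fin (d m)) (Fin (d m)) ℂ))
          0 (tildeA (A 0) 1))) *ᵥ ψ
      = famKron (Function.update (fun n => A n 1)
          0 (1 : Matrix (Fin (d 0)) (Fin (d 0)) ℂ)) *ᵥ ψ) ∧
    -- (2)
    (∀ n : Fin N, n ≠ 0 →
      ((-1 : ℂ) ^ ((a 0 : ℕ) + (a n : ℕ)) •
          famKron (Function.update (fun m => (1 : Matrix (Fin (d m)) (Fin (d m)) ℂ))
            0 (tildeA (A 0) 0))) *ᵥ ψ
        = famKron (Function.update (fun m => (1 : Matrix (Fin (d m)) (Fin (d m)) ℂ))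
            n (A n 0)) *ᵥ ψ) ∧
    -- (3)
    (∀ i : Fin 2,
      famKron (Function.update (fun m => (1 : Matrix (Fin (d m)) (Fin (d m)) ℂ))
          0 (A 0 i ^ 2)) *ᵥ ψ = ψ) ∧
    (famKron (Function.update (fun n => A n 1 ^ 2)
        0 (1 : Matrix (Fin (d 0)) (Fin (d 0)) ℂ)) *ᵥ ψ = ψ) ∧
    (∀ n : Fin N, n ≠ 0 →
      famKron (Function.update (fun m => (1 : Matrix (Fin (d m)) (Fin (d m)) ℂ))
          n (A n 0 ^ 2)) *ᵥ ψ = ψ) := by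
  have key := IsBellPair.mulVec_eq_of_sum_eq_two_mul_card
    (fun n hn => isBellPair_nBell_summand hAh hAc a (ne_of_mem_erase hn)) hψ
    (by rw [← nBell_eq_sum, hmax, cast_card_univ_erase_zero])
  have mem : ∀ n : Fin N, n ≠ 0 → n ∈ univ.erase 0 := fun n hn => mem_erase.mpr ⟨hn, mem_univ n⟩
  obtain ⟨hUV, -, hG₀, hG₁, hV, -⟩ := key ⟨1, hN⟩ (mem _ (Fin.ne_of_val_ne one_ne_zero))
  refine ⟨hUV, fun n hn => (key n (mem n hn)).2.1, Fin.forall_fin_two.mpr ⟨hG₀, hG₁⟩, ?_,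
    fun n hn => ?_⟩
  · rwa [← famKron_pow, Function.update_pow, one_pow] at hV
  · obtain ⟨-, -, -, -, -, hZ⟩ := key n (mem n hn)
    rwa [onFactor_pow] at hZ
end
end
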